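/- arXiv:1807.03638 — 2 statements merged into one kernel-verified Lean document; each statement's English description precedes it below -/
import Mathlib

section
/- Let (R, α) be a multiplicative Hom-Lie conformal superalgebra. Then GDer(R), QDer(R) and C(R) are subalgebras of Ω: each is closed under the twist α'(D) = D ∘ α (sending the α^k-part into the α^{k+1}-part) and under the commutator [D_λ D']_μ(a) = D_λ(D'_{μ−λ}(a)) − (−1)^{|D||D'|} D'_{μ−λ}(D_λ(a)) (sending the α^k-part times the α^s-part into the α^{k+s}-part, with polynomial coefficients in λ). -/
noncomputable section

namespace HLCS

open scoped BigOperators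

/-- Evaluation at `l : ℂ` of a polynomial (in `λ`) with coefficients in `M`,
encoded as a finitely supported family of coefficients. -/
def pev {M : Type} [AddCommGroup M] [Module ℂ M] (l : ℂ) (p : ℕ →₀ M) : M :=
  p.sum fun n r => l ^ n • r

/-- Evaluation of a polynomial with coefficients in `M` at an operator `T`
(used for substitutions such as `-λ - ∂`). -/
def pevOp {M : Type} [AddCommGroup M] [Module ℂ M] (T : Module.End ℂ M) (p : ℕ →₀ M) : M :=
  p.sum fun n r => (T ^ n) r

/-- The super sign `(-1)^{|a||b|}` attached to parities `i`, `j`. -/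
def sg (i j : ZMod 2) : ℂ := (-1 : ℂ) ^ (i * j).val

/-- The data of a `ℤ₂`-graded `ℂ[∂]`-module `R` with an endomorphism `α` and a
`ℂ`-bilinear `λ`-bracket with values in `ℂ[λ] ⊗ R` (encoded by its coefficients). -/
structure Data (R : Type) [AddCommGroup R] [Module ℂ R] where
  der : Module.End ℂ R
  alpha : Module.End ℂ R
  G : ZMod 2 → Submodule ℂ R
  br : R →ₗ[ℂ] R →ₗ[ℂ] (ℕ →₀ R)

namespace Data

variable {R : Type} [AddCommGroup R] [Module ℂ R] (S : Data R)

/-- `[a_λ b]` evaluated at `λ = l`. -/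
def lb (l : ℂ) (a b : R) : R := pev l (S.br a b)

/-- `[a_{-l-∂} b]` : the bracket with `-l - ∂` substituted for `λ`. -/
def lbOp (l : ℂ) (a b : R) : R :=
  pevOp ((-l) • (1 : Module.End ℂ R) - S.der) (S.br a b)

/-- Multiplicativity: `α [a_λ b] = [α(a)_λ α(b)]`. -/
def Mult : Prop := ∀ (l : ℂ) (a b : R), S.alpha (S.lb l a b) = S.lb l (S.alpha a) (S.alpha b)

end Data

variable {R : Type} [AddCommGroup R] [Module ℂ R]

/-- `(R, α)` with the given data is a Hom-Lie conformal superalgebra.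
All polynomial identities in `λ, μ` are stated by evaluating at arbitrary
complex numbers (which is equivalent, `ℂ` being infinite). -/
structure IsHLCS (S : Data R) : Prop where
  internal : DirectSum.IsInternal S.G
  der_even : ∀ i, ∀ a ∈ S.G i, S.der a ∈ S.G i
  alpha_even : ∀ i, ∀ a ∈ S.G i, S.alpha a ∈ S.G i
  alpha_der : ∀ a, S.alpha (S.der a) = S.der (S.alpha a)
  br_grade : ∀ i j, ∀ a ∈ S.G i, ∀ b ∈ S.G j, ∀ n, S.br a b n ∈ S.G (i + j)
  conf_left : ∀ (l : ℂ) (a b : R), S.lb l (S.der a) b = -l • S.lb l a b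
  conf_right : ∀ (l : ℂ) (a b : R), S.lb l a (S.der b) = S.der (S.lb l a b) + l • S.lb l a b
  skew : ∀ i j, ∀ a ∈ S.G i, ∀ b ∈ S.G j, ∀ l : ℂ,
    S.lb l a b = (-sg i j) • S.lbOp l b a
  jacobi : ∀ i j, ∀ a ∈ S.G i, ∀ b ∈ S.G j, ∀ (c : R) (l m : ℂ),
    S.lb l (S.alpha a) (S.lb m b c) =
      S.lb (l + m) (S.lb l a b) (S.alpha c) + sg i j • S.lb m (S.alpha b) (S.lb l a c)

end HLCS
namespace HLCS

variable {R : Type} [AddCommGroup R] [Module ℂ R]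

/-- A homogeneous conformal linear map of parity `d` on `R`, encoded as the family of
its evaluations `F l : R → R` (`l : ℂ`): it is `ℂ`-linear, polynomial in `l`, and
satisfies `F_λ(∂a) = (∂ + λ) F_λ(a)`. -/
structure IsConfMap (S : Data R) (d : ZMod 2) (F : ℂ → R → R) : Prop where
  map_add : ∀ (l : ℂ) (a b : R), F l (a + b) = F l a + F l b
  map_smul : ∀ (l c : ℂ) (a : R), F l (c • a) = c • F l a
  poly : ∀ a : R, ∃ p : ℕ →₀ R, ∀ l : ℂ, F l a = pev l p
  conf : ∀ (l : ℂ) (a : R), F l (S.der a) = S.der (F l a) + l • F l a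
  grade : ∀ i, ∀ a ∈ S.G i, ∀ l : ℂ, F l a ∈ S.G (i + d)

/-- Membership in `Ω`: a homogeneous conformal linear map commuting with `α`. -/
def InOmega (S : Data R) (d : ZMod 2) (F : ℂ → R → R) : Prop :=
  IsConfMap S d F ∧ ∀ (l : ℂ) (a : R), F l (S.alpha a) = S.alpha (F l a)

/-- An `α^k`-derivation of parity `d`. -/
def IsDer (S : Data R) (k : ℕ) (d : ZMod 2) (F : ℂ → R → R) : Prop :=
  InOmega S d F ∧ ∀ i, ∀ a ∈ S.G i, ∀ (b : R) (l m : ℂ),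
    F l (S.lb m a b) =
      S.lb (l + m) (F l a) ((S.alpha ^ k) b) +
        ((-1 : ℂ) ^ ((i * d).val)) • S.lb m ((S.alpha ^ k) a) (F l b)

/-- The commutator `[D_λ D']_μ (a) = D_λ(D'_{μ-λ}(a)) - (-1)^{|D||D'|} D'_{μ-λ}(D_λ(a))`,
with `e = (-1)^{|D||D'|}`; first argument `l` is `λ`, second `m` is `μ`. -/
def brkt (e : ℂ) (F G : ℂ → R → R) : ℂ → ℂ → R → R :=
  fun l m a => F l (G (m - l) a) - e • G (m - l) (F l a)

/-- The twist `α'(D) = D ∘ α`. -/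
def tw (S : Data R) (F : ℂ → R → R) : ℂ → R → R := fun l a => F l (S.alpha a)

/-- A generalized `α^k`-derivation of parity `d`. -/
def IsGDer (S : Data R) (k : ℕ) (d : ZMod 2) (F : ℂ → R → R) : Prop :=
  InOmega S d F ∧ ∃ F' F'' : ℂ → R → R, InOmega S d F' ∧ InOmega S d F'' ∧
    ∀ i, ∀ a ∈ S.G i, ∀ (b : R) (l m : ℂ),
      S.lb (l + m) (F m a) ((S.alpha ^ k) b) +
        ((-1 : ℂ) ^ ((d * i).val)) • S.lb l ((S.alpha ^ k) a) (F' m b) = F'' m (S.lb l a b)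

/-- An `α^k`-quasiderivation of parity `d`. -/
def IsQDer (S : Data R) (k : ℕ) (d : ZMod 2) (F : ℂ → R → R) : Prop :=
  InOmega S d F ∧ ∃ F' : ℂ → R → R, InOmega S d F' ∧
    ∀ i, ∀ a ∈ S.G i, ∀ (b : R) (l m : ℂ),
      S.lb (l + m) (F m a) ((S.alpha ^ k) b) +
        ((-1 : ℂ) ^ ((d * i).val)) • S.lb l ((S.alpha ^ k) a) (F m b) = F' m (S.lb l a b)

/-- An `α^k`-centroid of parity `d`. -/
def IsCent (S : Data R) (k : ℕ) (d : ZMod 2) (F : ℂ → R → R) : Prop :=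
  InOmega S d F ∧ ∀ i, ∀ a ∈ S.G i, ∀ (b : R) (l m : ℂ),
    S.lb (l + m) (F m a) ((S.alpha ^ k) b) =
      ((-1 : ℂ) ^ ((d * i).val)) • S.lb l ((S.alpha ^ k) a) (F m b) ∧
    S.lb (l + m) (F m a) ((S.alpha ^ k) b) = F m (S.lb l a b)

/-- An `α^k`-quasicentroid of parity `d`. -/
def IsQC (S : Data R) (k : ℕ) (d : ZMod 2) (F : ℂ → R → R) : Prop :=
  InOmega S d F ∧ ∀ i, ∀ a ∈ S.G i, ∀ (b : R) (l m : ℂ),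
    S.lb (l + m) (F m a) ((S.alpha ^ k) b) =
      ((-1 : ℂ) ^ ((d * i).val)) • S.lb l ((S.alpha ^ k) a) (F m b)

/-- An `α^k`-central derivation of parity `d`. -/
def IsZDer (S : Data R) (k : ℕ) (d : ZMod 2) (F : ℂ → R → R) : Prop :=
  InOmega S d F ∧ ∀ (a b : R) (l m : ℂ),
    S.lb (l + m) (F m a) ((S.alpha ^ k) b) = 0 ∧ F m (S.lb l a b) = 0

/-- Membership in the center `Z(R)`. -/
def IsCentral (S : Data R) (x : R) : Prop := ∀ (l : ℂ) (y : R), S.lb l x y = 0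

end HLCS

/-! The closure properties are checked one value of the parameter `μ` at a time: for fixed `μ`
the identity defining a generalized `α^k`-derivation, resp. an `α^k`-centroid, is a statement
about single linear maps of `R` (`GDerAt`, `CentAt`). Twisting by `α` preserves it since `α` is
even and multiplicative. For the commutator, expanding `D''_λ (E''_{μ-λ} [a_ν b])` with the two
identities yields four terms; the two mixed ones cancel against those of the reversed composite,
because all maps commute with `α` and `(-1)^{2|D||E|} = 1`. Centroids are even closed under
composition, and the commutator is a linear combination of composites. -/

namespace HLCS

variable {R : Type} [AddCommGroup R] [Module ℂ R]

def pevₗ (l : ℂ) : (ℕ →₀ R) →ₗ[ℂ] R :=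
  PolynomialModule.eval l ∘ₗ (PolynomialModule.coeffLinearEquiv ℂ ℂ).symm.toLinearMap

lemma pev_eq_pevₗ (l : ℂ) (p : ℕ →₀ R) : pev l p = pevₗ l p := rfl

variable (R) in
def polyFamilies : Submodule ℂ (ℂ → R) :=
  LinearMap.range (LinearMap.pi fun l : ℂ => (pevₗ l : (ℕ →₀ R) →ₗ[ℂ] R))

lemma mem_polyFamilies {f : ℂ → R} :
    f ∈ polyFamilies R ↔ ∃ p : ℕ →₀ R, ∀ l, f l = pev l p := by
  simp only [polyFamilies, LinearMap.mem_range, funext_iff, LinearMap.pi_apply, pev_eq_pevₗ,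
    eq_comm]

lemma comp_sub_mem_polyFamilies {f : ℂ → R} (hf : f ∈ polyFamilies R) (c : ℂ) :
    (fun m => f (m - c)) ∈ polyFamilies R := by
  obtain ⟨p, rfl⟩ := hf
  refine ⟨(PolynomialModule.comp (Polynomial.X - Polynomial.C c)
    (PolynomialModule.ofCoeff ℂ p)).coeff, funext fun m => ?_⟩
  change PolynomialModule.eval m (PolynomialModule.comp _ _) = PolynomialModule.eval (m - c) _
  rw [PolynomialModule.comp_eval]
  simp

lemma linearMap_comp_mem_polyFamilies (T : R →ₗ[ℂ] R) {f : ℂ → R} (hf : f ∈ polyFamilies R) :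
    (fun l => T (f l)) ∈ polyFamilies R := by
  obtain ⟨p, rfl⟩ := hf
  refine ⟨(PolynomialModule.map ℂ T (PolynomialModule.ofCoeff ℂ p)).coeff, funext fun l => ?_⟩
  exact PolynomialModule.eval_map' T _ l

lemma neg_one_pow_val_add (x y : ZMod 2) :
    (-1 : ℂ) ^ (x + y).val = (-1) ^ x.val * (-1) ^ y.val := by
  rw [ZMod.val_add, ← neg_one_pow_eq_pow_mod_two, pow_add]

namespace Data

variable (S : Data R)

lemma lb_eq_pevₗ (l : ℂ) (a b : R) : S.lb l a b = pevₗ l (S.br a b) := rfl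

lemma lb_sub_left (l : ℂ) (a a' b : R) : S.lb l (a - a') b = S.lb l a b - S.lb l a' b := by
  simp only [lb_eq_pevₗ, map_sub, LinearMap.sub_apply]

lemma lb_smul_left (l c : ℂ) (a b : R) : S.lb l (c • a) b = c • S.lb l a b := by
  simp only [lb_eq_pevₗ, map_smul, LinearMap.smul_apply]

lemma lb_sub_right (l : ℂ) (a b b' : R) : S.lb l a (b - b') = S.lb l a b - S.lb l a b' := by
  simp only [lb_eq_pevₗ, map_sub]

lemma lb_smul_right (l c : ℂ) (a b : R) : S.lb l a (c • b) = c • S.lb l a b := by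
  simp only [lb_eq_pevₗ, map_smul]

end Data

lemma IsHLCS.alpha_pow_mem {S : Data R} (hS : IsHLCS S) (n : ℕ) {i : ZMod 2} {a : R}
    (ha : a ∈ S.G i) : (S.alpha ^ n) a ∈ S.G i := by
  induction n with
  | zero => exact ha
  | succ n ih => exact pow_succ' S.alpha n ▸ hS.alpha_even i _ ih

lemma alpha_pow_apply_alpha_pow (S : Data R) (k s : ℕ) (x : R) :
    (S.alpha ^ k) ((S.alpha ^ s) x) = (S.alpha ^ (k + s)) x := by
  rw [pow_add, Module.End.mul_apply]

namespace IsConfMap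

variable {S : Data R} {d : ZMod 2} {F : ℂ → R → R}

def toEnd (h : IsConfMap S d F) (l : ℂ) : Module.End ℂ R where
  toFun := F l
  map_add' := h.map_add l
  map_smul' := h.map_smul l

end IsConfMap

namespace InOmega

variable {S : Data R} {d d' : ZMod 2} {F G : ℂ → R → R}

lemma commute_alpha (h : InOmega S d F) (l : ℂ) : Commute (h.1.toEnd l) S.alpha :=
  LinearMap.ext fun a => h.2 l a

lemma toEnd_mem (h : InOmega S d F) (l : ℂ) : ∀ i, ∀ a ∈ S.G i, h.1.toEnd l a ∈ S.G (i + d) :=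
  fun i a ha => h.1.grade i a ha l

lemma tw (hS : IsHLCS S) (h : InOmega S d F) : InOmega S d (tw S F) := by
  obtain ⟨hF, hFα⟩ := h
  refine ⟨⟨fun l a b => ?_, fun l c a => ?_, fun a => hF.poly (S.alpha a), fun l a => ?_,
    fun i a ha l => hF.grade i _ (hS.alpha_even i a ha) l⟩, fun l a => hFα l (S.alpha a)⟩
  · simp only [HLCS.tw, map_add, hF.map_add]
  · simp only [HLCS.tw, map_smul, hF.map_smul]
  · simp only [HLCS.tw, hS.alpha_der, hF.conf]

lemma brkt (hF : InOmega S d F) (hG : InOmega S d' G) (e l₀ : ℂ) :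
    InOmega S (d + d') (brkt e F G l₀) := by
  obtain ⟨hF, hFα⟩ := hF
  obtain ⟨hG, hGα⟩ := hG
  refine ⟨⟨fun m a b => ?_, fun m c a => ?_, fun a => ?_, fun m a => ?_, fun i a ha m => ?_⟩,
    fun m a => ?_⟩
  · simp only [HLCS.brkt, hG.map_add, hF.map_add, smul_add]
    abel
  · simp only [HLCS.brkt, hG.map_smul, hF.map_smul, smul_sub, smul_comm e c]
  · refine mem_polyFamilies.mp (sub_mem ?_ (Submodule.smul_mem _ e ?_))
    · exact linearMap_comp_mem_polyFamilies (hF.toEnd l₀)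
        (comp_sub_mem_polyFamilies (mem_polyFamilies.mpr (hG.poly a)) l₀)
    · exact comp_sub_mem_polyFamilies (mem_polyFamilies.mpr (hG.poly (F l₀ a))) l₀
  · simp only [HLCS.brkt, hG.conf, hF.conf, hF.map_add, hF.map_smul, hG.map_add,
      hG.map_smul, map_sub, map_smul]
    module
  · have hFG := hF.grade _ _ (hG.grade i a ha (m - l₀)) l₀
    have hGF := hG.grade _ _ (hF.grade i a ha l₀) (m - l₀)
    rw [add_assoc, add_comm d'] at hFG
    rw [add_assoc] at hGF
    exact sub_mem hFG (Submodule.smul_mem _ e hGF)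
  · simp only [HLCS.brkt, hGα, hFα, map_sub, map_smul]

end InOmega

lemma apply_pow_apply_of_commute {A M : Type*} [Semiring A] [AddCommMonoid M] [Module A M]
    {f g : Module.End A M} (h : Commute f g) (n : ℕ) (x : M) :
    f ((g ^ n) x) = (g ^ n) (f x) :=
  LinearMap.congr_fun (h.pow_right n).eq x

def GDerAt (S : Data R) (k : ℕ) (d : ZMod 2) (c : ℂ) (f f' f'' : R → R) : Prop :=
  ∀ i, ∀ a ∈ S.G i, ∀ (b : R) (l : ℂ),
    S.lb (l + c) (f a) ((S.alpha ^ k) b) +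
      ((-1 : ℂ) ^ ((d * i).val)) • S.lb l ((S.alpha ^ k) a) (f' b) = f'' (S.lb l a b)

namespace GDerAt

variable {S : Data R} {k s : ℕ} {d d' : ZMod 2} {c c' : ℂ}

lemma comp_alpha (hS : IsHLCS S) (hmult : S.Mult) {f f' f'' : R → R}
    (h : GDerAt S k d c f f' f'') :
    GDerAt S (k + 1) d c (fun a => f (S.alpha a)) (fun a => f' (S.alpha a))
      (fun a => f'' (S.alpha a)) := by
  intro i a ha b l
  simpa only [pow_succ, Module.End.mul_apply, hmult l a b] using
    h i _ (hS.alpha_even i a ha) (S.alpha b) l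

lemma apply_apply_lb (hS : IsHLCS S) {f f' g g' g'' : R → R} {f'' : Module.End ℂ R}
    (hf : GDerAt S k d c f f' f'') (hg : GDerAt S s d' c' g g' g'')
    {i : ZMod 2} {a : R} (ha : a ∈ S.G i) (hga : g a ∈ S.G (i + d')) (b : R) (l : ℂ) :
    f'' (g'' (S.lb l a b)) =
      S.lb (l + (c' + c)) (f (g a)) ((S.alpha ^ (k + s)) b) +
        (-1 : ℂ) ^ (d * (i + d')).val •
          S.lb (l + c') ((S.alpha ^ k) (g a)) (f' ((S.alpha ^ s) b)) +
        (-1 : ℂ) ^ (d' * i).val •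
          (S.lb (l + c) (f ((S.alpha ^ s) a)) ((S.alpha ^ k) (g' b)) +
            (-1 : ℂ) ^ (d * i).val • S.lb l ((S.alpha ^ (k + s)) a) (f' (g' b))) := by
  rw [← hg i a ha b l, map_add, map_smul, ← hf _ _ hga, ← hf i _ (hS.alpha_pow_mem s ha),
    alpha_pow_apply_alpha_pow, alpha_pow_apply_alpha_pow]
  simp only [add_assoc]

lemma commutator (hS : IsHLCS S) {f f' f'' g g' g'' : Module.End ℂ R}
    (hf : GDerAt S k d c f f' f'') (hg : GDerAt S s d' c' g g' g'')
    (hfd : ∀ i, ∀ a ∈ S.G i, f a ∈ S.G (i + d)) (hgd : ∀ i, ∀ a ∈ S.G i, g a ∈ S.G (i + d'))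
    (hfα : Commute f S.alpha) (hf'α : Commute f' S.alpha)
    (hgα : Commute g S.alpha) (hg'α : Commute g' S.alpha) :
    GDerAt S (k + s) (d + d') (c + c')
      ⇑(f * g - (-1 : ℂ) ^ (d * d').val • (g * f))
      ⇑(f' * g' - (-1 : ℂ) ^ (d * d').val • (g' * f'))
      ⇑(f'' * g'' - (-1 : ℂ) ^ (d * d').val • (g'' * f'')) := by
  intro i a ha b l
  have hfg := hf.apply_apply_lb hS hg ha (hgd i a ha) b l
  have hgf := hg.apply_apply_lb hS hf ha (hfd i a ha) b l
  rw [add_comm c' c] at hfg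
  rw [add_comm s k] at hgf
  simp only [LinearMap.sub_apply, LinearMap.smul_apply, Module.End.mul_apply, S.lb_sub_left,
    S.lb_smul_left, S.lb_sub_right, S.lb_smul_right, hfg, hgf,
    apply_pow_apply_of_commute hfα, apply_pow_apply_of_commute hf'α,
    apply_pow_apply_of_commute hgα, apply_pow_apply_of_commute hg'α,
    mul_add, add_mul, neg_one_pow_val_add, mul_comm d' d]
  rcases neg_one_pow_eq_or ℂ (d * d').val with h | h <;> rw [h] <;> module

end GDerAt

def CentAt (S : Data R) (k : ℕ) (d : ZMod 2) (c : ℂ) (f : R → R) : Prop :=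
  ∀ i, ∀ a ∈ S.G i, ∀ (b : R) (l : ℂ),
    S.lb (l + c) (f a) ((S.alpha ^ k) b) =
        ((-1 : ℂ) ^ ((d * i).val)) • S.lb l ((S.alpha ^ k) a) (f b) ∧
      S.lb (l + c) (f a) ((S.alpha ^ k) b) = f (S.lb l a b)

namespace CentAt

variable {S : Data R} {k s : ℕ} {d d' : ZMod 2} {c c' : ℂ}

lemma comp_alpha (hS : IsHLCS S) (hmult : S.Mult) {f : R → R} (h : CentAt S k d c f) :
    CentAt S (k + 1) d c (fun a => f (S.alpha a)) := by
  intro i a ha b l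
  simpa only [pow_succ, Module.End.mul_apply, hmult l a b] using
    h i _ (hS.alpha_even i a ha) (S.alpha b) l

lemma sub {f g : Module.End ℂ R} (hf : CentAt S k d c f) (hg : CentAt S k d c g) :
    CentAt S k d c ⇑(f - g) := by
  intro i a ha b l
  obtain ⟨hf₁, hf₂⟩ := hf i a ha b l
  obtain ⟨hg₁, hg₂⟩ := hg i a ha b l
  simp only [LinearMap.sub_apply, S.lb_sub_left, S.lb_sub_right]
  exact ⟨by rw [hf₁, hg₁, smul_sub], by rw [hf₂, hg₂]⟩

lemma smul {f : Module.End ℂ R} (hf : CentAt S k d c f) (e : ℂ) : CentAt S k d c ⇑(e • f) := by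
  intro i a ha b l
  obtain ⟨hf₁, hf₂⟩ := hf i a ha b l
  simp only [LinearMap.smul_apply, S.lb_smul_left, S.lb_smul_right]
  exact ⟨by rw [hf₁, smul_comm], by rw [hf₂]⟩

lemma mul (hS : IsHLCS S) {f g : Module.End ℂ R} (hf : CentAt S k d c f)
    (hg : CentAt S s d' c' g) (hgd : ∀ i, ∀ a ∈ S.G i, g a ∈ S.G (i + d')) :
    CentAt S (k + s) (d + d') (c + c') ⇑(f * g) := by
  intro i a ha b l
  obtain ⟨hg₁, hg₂⟩ := hg i a ha b l
  obtain ⟨hf₁, hf₂⟩ := hf i _ (hS.alpha_pow_mem s ha) (g b) l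
  have hfg : S.lb (l + (c + c')) (f (g a)) ((S.alpha ^ (k + s)) b) = f (g (S.lb l a b)) := by
    rw [← hg₂, ← (hf _ _ (hgd i a ha) _ _).2, alpha_pow_apply_alpha_pow, add_comm c,
      add_assoc]
  simp only [Module.End.mul_apply]
  refine ⟨?_, hfg⟩
  rw [hfg, ← hg₂, hg₁, map_smul, ← hf₂, hf₁, alpha_pow_apply_alpha_pow, add_mul,
    neg_one_pow_val_add, smul_smul, mul_comm]

lemma commutator (hS : IsHLCS S) {f g : Module.End ℂ R}
    (hf : CentAt S k d c f) (hg : CentAt S s d' c' g)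
    (hfd : ∀ i, ∀ a ∈ S.G i, f a ∈ S.G (i + d)) (hgd : ∀ i, ∀ a ∈ S.G i, g a ∈ S.G (i + d')) :
    CentAt S (k + s) (d + d') (c + c') ⇑(f * g - (-1 : ℂ) ^ (d * d').val • (g * f)) := by
  have hgf := hg.mul hS hf hfd
  rw [add_comm s, add_comm d', add_comm c'] at hgf
  exact (hf.mul hS hg hgd).sub (hgf.smul _)

end CentAt

variable {S : Data R} {k s : ℕ} {d d' : ZMod 2} {F G : ℂ → R → R}

lemma GDerAt.brkt (hS : IsHLCS S) {F' F'' G' G'' : ℂ → R → R}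
    (hF : InOmega S d F) (hF' : InOmega S d F') (hF'' : InOmega S d F'')
    (hG : InOmega S d' G) (hG' : InOmega S d' G') (hG'' : InOmega S d' G'')
    (hrF : ∀ m, GDerAt S k d m (F m) (F' m) (F'' m))
    (hrG : ∀ m, GDerAt S s d' m (G m) (G' m) (G'' m)) (l₀ m : ℂ) :
    GDerAt S (k + s) (d + d') m (brkt ((-1 : ℂ) ^ (d * d').val) F G l₀ m)
      (brkt ((-1 : ℂ) ^ (d * d').val) F' G' l₀ m)
      (brkt ((-1 : ℂ) ^ (d * d').val) F'' G'' l₀ m) := by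
  have h := GDerAt.commutator hS (f := hF.1.toEnd l₀) (f' := hF'.1.toEnd l₀)
    (f'' := hF''.1.toEnd l₀) (g := hG.1.toEnd (m - l₀)) (g' := hG'.1.toEnd (m - l₀))
    (g'' := hG''.1.toEnd (m - l₀)) (hrF l₀) (hrG (m - l₀)) (hF.toEnd_mem l₀) (hG.toEnd_mem _)
    (hF.commute_alpha l₀) (hF'.commute_alpha l₀) (hG.commute_alpha _) (hG'.commute_alpha _)
  rwa [add_sub_cancel] at h

lemma IsGDer.tw (hS : IsHLCS S) (hmult : S.Mult) (h : IsGDer S k d F) :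
    IsGDer S (k + 1) d (tw S F) := by
  obtain ⟨hF, F', F'', hF', hF'', hrel⟩ := h
  exact ⟨hF.tw hS, HLCS.tw S F', HLCS.tw S F'', hF'.tw hS, hF''.tw hS, fun i a ha b l m =>
    GDerAt.comp_alpha hS hmult (fun i a ha b l => hrel i a ha b l m) i a ha b l⟩

lemma IsGDer.brkt (hS : IsHLCS S) (hF : IsGDer S k d F) (hG : IsGDer S s d' G) (l₀ : ℂ) :
    IsGDer S (k + s) (d + d') (brkt ((-1 : ℂ) ^ (d * d').val) F G l₀) := by
  obtain ⟨hF, F', F'', hF', hF'', hrF⟩ := hF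
  obtain ⟨hG, G', G'', hG', hG'', hrG⟩ := hG
  set ε := (-1 : ℂ) ^ (d * d').val
  exact ⟨hF.brkt hG ε l₀, HLCS.brkt ε F' G' l₀, HLCS.brkt ε F'' G'' l₀, hF'.brkt hG' ε l₀,
    hF''.brkt hG'' ε l₀, fun i a ha b l m =>
      GDerAt.brkt hS hF hF' hF'' hG hG' hG'' (fun m i a ha b l => hrF i a ha b l m)
        (fun m i a ha b l => hrG i a ha b l m) l₀ m i a ha b l⟩

lemma IsQDer.tw (hS : IsHLCS S) (hmult : S.Mult) (h : IsQDer S k d F) :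
    IsQDer S (k + 1) d (tw S F) := by
  obtain ⟨hF, F', hF', hrel⟩ := h
  exact ⟨hF.tw hS, HLCS.tw S F', hF'.tw hS, fun i a ha b l m =>
    GDerAt.comp_alpha hS hmult (fun i a ha b l => hrel i a ha b l m) i a ha b l⟩

lemma IsQDer.brkt (hS : IsHLCS S) (hF : IsQDer S k d F) (hG : IsQDer S s d' G) (l₀ : ℂ) :
    IsQDer S (k + s) (d + d') (brkt ((-1 : ℂ) ^ (d * d').val) F G l₀) := by
  obtain ⟨hF, F', hF', hrF⟩ := hF
  obtain ⟨hG, G', hG', hrG⟩ := hG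
  set ε := (-1 : ℂ) ^ (d * d').val
  exact ⟨hF.brkt hG ε l₀, HLCS.brkt ε F' G' l₀, hF'.brkt hG' ε l₀, fun i a ha b l m =>
    GDerAt.brkt hS hF hF hF' hG hG hG' (fun m i a ha b l => hrF i a ha b l m)
      (fun m i a ha b l => hrG i a ha b l m) l₀ m i a ha b l⟩

lemma IsCent.tw (hS : IsHLCS S) (hmult : S.Mult) (h : IsCent S k d F) :
    IsCent S (k + 1) d (tw S F) :=
  ⟨h.1.tw hS, fun i a ha b l m =>
    CentAt.comp_alpha hS hmult (fun i a ha b l => h.2 i a ha b l m) i a ha b l⟩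

lemma IsCent.brkt (hS : IsHLCS S) (hF : IsCent S k d F) (hG : IsCent S s d' G) (l₀ : ℂ) :
    IsCent S (k + s) (d + d') (brkt ((-1 : ℂ) ^ (d * d').val) F G l₀) := by
  refine ⟨hF.1.brkt hG.1 _ l₀, fun i a ha b l m => ?_⟩
  have h := CentAt.commutator hS (f := hF.1.1.toEnd l₀) (g := hG.1.1.toEnd (m - l₀))
    (fun i a ha b l => hF.2 i a ha b l l₀) (fun i a ha b l => hG.2 i a ha b l (m - l₀))
    (hF.1.toEnd_mem l₀) (hG.1.toEnd_mem _)
  rw [add_sub_cancel] at h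
  exact h i a ha b l

/-- For a multiplicative Hom-Lie conformal superalgebra `(R, α)`,
the spaces `GDer(R)`, `QDer(R)` and `C(R)` are subalgebras of `Ω`: each is closed
under the twist `α'(D) = D ∘ α` (sending the `α^k`-part into the `α^{k+1}`-part)
and under the commutator (sending the `α^k`-part times the `α^s`-part into the
`α^{k+s}`-part, with polynomial coefficients in `λ`). -/
theorem gder_qder_cent_subalgebras (S : Data R) (hS : IsHLCS S) (hmult : S.Mult) :
    ((∀ (k : ℕ) (d : ZMod 2) (F : ℂ → R → R),
        IsGDer S k d F → IsGDer S (k + 1) d (tw S F)) ∧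
      (∀ (k s : ℕ) (d d' : ZMod 2) (F G : ℂ → R → R),
        IsGDer S k d F → IsGDer S s d' G →
          ∀ l : ℂ, IsGDer S (k + s) (d + d') (brkt ((-1 : ℂ) ^ ((d * d').val)) F G l))) ∧
    ((∀ (k : ℕ) (d : ZMod 2) (F : ℂ → R → R),
        IsQDer S k d F → IsQDer S (k + 1) d (tw S F)) ∧
      (∀ (k s : ℕ) (d d' : ZMod 2) (F G : ℂ → R → R),
        IsQDer S k d F → IsQDer S s d' G →
          ∀ l : ℂ, IsQDer S (k + s) (d + d') (brkt ((-1 : ℂ) ^ ((d * d').val)) F G l))) ∧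
    ((∀ (k : ℕ) (d : ZMod 2) (F : ℂ → R → R),
        IsCent S k d F → IsCent S (k + 1) d (tw S F)) ∧
      (∀ (k s : ℕ) (d d' : ZMod 2) (F G : ℂ → R → R),
        IsCent S k d F → IsCent S s d' G →
          ∀ l : ℂ, IsCent S (k + s) (d + d') (brkt ((-1 : ℂ) ^ ((d * d').val)) F G l))) :=
  ⟨⟨fun _ _ _ hF => hF.tw hS hmult, fun _ _ _ _ _ _ hF hG => hF.brkt hS hG⟩,
    ⟨fun _ _ _ hF => hF.tw hS hmult, fun _ _ _ _ _ _ hF hG => hF.brkt hS hG⟩,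
    ⟨fun _ _ _ hF => hF.tw hS hmult, fun _ _ _ _ _ _ hF hG => hF.brkt hS hG⟩⟩

end HLCS
end
end

section
/- Let (R, α) be a multiplicative Hom-Lie conformal superalgebra with α surjective, and let Z(R) be its center. Then [C(R)_λ QC(R)] ⊆ Chom(R, Z(R))[λ]: for any homogeneous D₁ ∈ C_{α^k}(R) and D₂ ∈ QC_{α^s}(R), the commutator [D₁_μ D₂] takes values in Z(R)[μ]. Moreover, if Z(R) = 0, then [C(R)_λ QC(R)] = 0. -/
noncomputable section

/-!
Write `u = μ - λ`, take `x` homogeneous and, `α` being surjective, `y = α^{k+s}(c)`. Then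
moving `D₁` out of the bracket by the centroid identity and `D₂` across it by the
quasicentroid identity turns both `[D₁_λ (D₂_u x) _ν y]` and `[D₂_u (D₁_λ x) _ν y]` into
`D₁_λ [α^s(x) _{ν-μ} D₂_u c]`, with signs `(-1)^{|D₂||x|}` and `(-1)^{|D₂|(|x|+|D₁|)}`.
After the factor `(-1)^{|D₁||D₂|}` of the commutator the two terms cancel, so
`[D₁_λ D₂]_μ x` is central; the general case follows by linearity.
-/

lemma LinearMap.eq_zero_of_iSup_eq_top {A M N ι : Type*} [Semiring A] [AddCommMonoid M]
    [Module A M] [AddCommMonoid N] [Module A N] {G : ι → Submodule A M} (hG : iSup G = ⊤)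
    (φ : M →ₗ[A] N) (h : ∀ i, ∀ x ∈ G i, φ x = 0) : φ = 0 := by
  ext x
  have hle : (⊤ : Submodule A M) ≤ LinearMap.ker φ := hG ▸ iSup_le fun i x hx => h i x hx
  exact hle Submodule.mem_top

namespace HLCS

lemma neg_one_pow_val_mul_mul_val_mul_add (d d' i : ZMod 2) :
    (-1 : ℂ) ^ (d * d').val * (-1 : ℂ) ^ (d' * (i + d)).val = (-1 : ℂ) ^ (d' * i).val := by
  rw [← pow_add, neg_one_pow_eq_pow_mod_two, ← ZMod.val_add]
  congr 2
  revert d d' i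
  decide

variable {R : Type} [AddCommGroup R] [Module ℂ R]

namespace Data

variable (S : Data R)

def lbLeft (ν : ℂ) (b : R) : R →ₗ[ℂ] R :=
  (Finsupp.lsum ℂ fun n => ν ^ n • LinearMap.id) ∘ₗ S.br.flip b

@[simp]
lemma lbLeft_apply (ν : ℂ) (a b : R) : S.lbLeft ν b a = S.lb ν a b := rfl

end Data

namespace IsConfMap

variable {S : Data R} {d : ZMod 2} {F : ℂ → R → R}

def toLinearMap (hF : IsConfMap S d F) (l : ℂ) : R →ₗ[ℂ] R where
  toFun := F l
  map_add' := hF.map_add l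
  map_smul' := hF.map_smul l

end IsConfMap

lemma brkt_eq_linearMap {S : Data R} {d d' : ZMod 2} {F G : ℂ → R → R}
    (hF : IsConfMap S d F) (hG : IsConfMap S d' G) (e l m : ℂ) :
    brkt e F G l m = ⇑(hF.toLinearMap l ∘ₗ hG.toLinearMap (m - l) -
      e • hG.toLinearMap (m - l) ∘ₗ hF.toLinearMap l) :=
  rfl

lemma InOmega.apply_alpha_pow {S : Data R} {d : ZMod 2} {F : ℂ → R → R} (hF : InOmega S d F)
    (n : ℕ) (l : ℂ) (a : R) : F l ((S.alpha ^ n) a) = (S.alpha ^ n) (F l a) := by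
  simp only [Module.End.coe_pow]
  exact Function.Commute.iterate_right (hF.2 l) n a

namespace IsHLCS

variable {S : Data R}

lemma alpha_pow_mem_s18 (hS : IsHLCS S) (n : ℕ) {i : ZMod 2} {a : R} (ha : a ∈ S.G i) :
    (S.alpha ^ n) a ∈ S.G i := by
  induction n generalizing a with
  | zero => simpa using ha
  | succ n ih => exact ih (hS.alpha_even i a ha)

lemma isCentral_of_forall_homogeneous (hS : IsHLCS S) (φ : R →ₗ[ℂ] R)
    (h : ∀ i, ∀ x ∈ S.G i, IsCentral S (φ x)) (a : R) : IsCentral S (φ a) := fun ν y =>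
  LinearMap.congr_fun (LinearMap.eq_zero_of_iSup_eq_top hS.internal.submodule_iSup_eq_top
    (S.lbLeft ν y ∘ₗ φ) fun i x hx => h i x hx ν y) a

end IsHLCS

section CentroidQuasicentroid

variable {S : Data R} {k s : ℕ} {d d' : ZMod 2} {F G : ℂ → R → R}

lemma lb_cent_comp_qc (hF : IsCent S k d F) (hG : IsQC S s d' G) {i : ZMod 2} {x : R}
    (hx : x ∈ S.G i) (c : R) (l u ν : ℂ) :
    S.lb ν (F l (G u x)) ((S.alpha ^ (k + s)) c) =
      (-1 : ℂ) ^ (d' * i).val • F l (S.lb (ν - l - u) ((S.alpha ^ s) x) (G u c)) := by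
  have hcent := (hF.2 (i + d') (G u x) (hG.1.1.grade i x hx u) ((S.alpha ^ s) c) (ν - l) l).2
  have hqc := hG.2 i x hx c (ν - l - u) u
  rw [sub_add_cancel] at hcent hqc
  rw [pow_add, Module.End.mul_apply, hcent, hqc, hF.1.1.map_smul]

lemma lb_qc_comp_cent (hS : IsHLCS S) (hF : IsCent S k d F) (hG : IsQC S s d' G) {i : ZMod 2}
    {x : R} (hx : x ∈ S.G i) (c : R) (l u ν : ℂ) :
    S.lb ν (G u (F l x)) ((S.alpha ^ (k + s)) c) =
      (-1 : ℂ) ^ (d' * (i + d)).val • F l (S.lb (ν - l - u) ((S.alpha ^ s) x) (G u c)) := by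
  have hqc := hG.2 (i + d) (F l x) (hF.1.1.grade i x hx l) ((S.alpha ^ k) c) (ν - u) u
  have hcent := (hF.2 i ((S.alpha ^ s) x) (hS.alpha_pow_mem_s18 s hx) (G u c) (ν - l - u) l).2
  rw [sub_add_cancel, ← hF.1.apply_alpha_pow, hG.1.apply_alpha_pow] at hqc
  rw [sub_right_comm, sub_add_cancel] at hcent
  rw [add_comm, pow_add, Module.End.mul_apply, hqc, hcent, sub_right_comm]

lemma isCentral_brkt_of_mem (hS : IsHLCS S) (hsurj : Function.Surjective S.alpha)
    (hF : IsCent S k d F) (hG : IsQC S s d' G) (l m : ℂ) {i : ZMod 2} {x : R}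
    (hx : x ∈ S.G i) : IsCentral S (brkt ((-1 : ℂ) ^ (d * d').val) F G l m x) := by
  intro ν y
  obtain ⟨c, rfl⟩ : ∃ c, (S.alpha ^ (k + s)) c = y := by
    simpa only [Module.End.coe_pow] using hsurj.iterate (k + s) y
  rw [brkt, ← S.lbLeft_apply, map_sub, map_smul, S.lbLeft_apply, S.lbLeft_apply,
    lb_cent_comp_qc hF hG hx, lb_qc_comp_cent hS hF hG hx, smul_smul,
    neg_one_pow_val_mul_mul_val_mul_add, sub_self]

end CentroidQuasicentroid

theorem cent_bracket_qc_central_general (S : Data R) (hS : IsHLCS S)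
    (hsurj : Function.Surjective S.alpha)
    (k s : ℕ) (d d' : ZMod 2) (F G : ℂ → R → R)
    (hF : IsCent S k d F) (hG : IsQC S s d' G) :
    (∀ (l m : ℂ) (a : R),
      IsCentral S (brkt ((-1 : ℂ) ^ ((d * d').val)) F G l m a)) ∧
    ((∀ x : R, IsCentral S x → x = 0) →
      ∀ (l m : ℂ) (a : R), brkt ((-1 : ℂ) ^ ((d * d').val)) F G l m a = 0) := by
  have central : ∀ (l m : ℂ) (a : R),
      IsCentral S (brkt ((-1 : ℂ) ^ ((d * d').val)) F G l m a) := by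
    intro l m
    rw [brkt_eq_linearMap hF.1.1 hG.1.1]
    exact hS.isCentral_of_forall_homogeneous _ fun i x hx =>
      isCentral_brkt_of_mem hS hsurj hF hG l m hx
  exact ⟨central, fun hZ l m a => hZ _ (central l m a)⟩

/-- Let `(R, α)` be a multiplicative Hom-Lie conformal superalgebra
with `α` surjective and center `Z(R)`.  Then `[C(R)_λ QC(R)] ⊆ Chom(R, Z(R))[λ]`:
the commutator of a homogeneous `α^k`-centroid with a homogeneous
`α^s`-quasicentroid takes values in `Z(R)`.  Moreover, if `Z(R) = 0` then
`[C(R)_λ QC(R)] = 0`. -/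
theorem cent_bracket_qc_central (S : Data R) (hS : IsHLCS S) (hmult : S.Mult)
    (hsurj : Function.Surjective S.alpha)
    (k s : ℕ) (d d' : ZMod 2) (F G : ℂ → R → R)
    (hF : IsCent S k d F) (hG : IsQC S s d' G) :
    (∀ (l m : ℂ) (a : R),
      IsCentral S (brkt ((-1 : ℂ) ^ ((d * d').val)) F G l m a)) ∧
    ((∀ x : R, IsCentral S x → x = 0) →
      ∀ (l m : ℂ) (a : R), brkt ((-1 : ℂ) ^ ((d * d').val)) F G l m a = 0) :=
  cent_bracket_qc_central_general S hS hsurj k s d d' F G hF hG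

end HLCS
end
end
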